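/- In ℝ^10 with coordinates indexed by 2-element subsets of {1,…,5}, define v(I)_{jk} = 1 if |I ∩ {j,k}| = 1 and 0 otherwise, and d_a = v({a}); let L be the span of d_1,…,d_5. Then the six vectors v({2,3}), v({2,4}), v({2,5}), v({3,4}), v({3,5}), v({4,5}) form a minimally dependent set modulo L: some nontrivial linear combination of all six lies in L, but no nontrivial linear combination of any proper subset of them lies in L. -/

import Mathlib

/-- Index type: 2-element subsets of {1,…,n} (modeled as `Fin n`, 0-based). -/
def Pair (n : ℕ) := {s : Finset (Fin n) // s.card = 2}

noncomputable instance (n : ℕ) : Fintype (Pair n) := by unfold Pair; infer_instance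

/-- The vector v(I): coordinate at the pair {j,k} is 1 iff |I ∩ {j,k}| = 1. -/
def v (n : ℕ) (I : Finset (Fin n)) : Pair n → ℝ :=
  fun s => if (I ∩ s.val).card = 1 then 1 else 0

/-- d_a = v({a}). -/
def d (n : ℕ) (a : Fin n) : Pair n → ℝ := v n {a}

/-- The six rays of the Psi-class ψ₁ in M_{0,5} (ends modeled 0-based):
the vectors v({i,j}) for {i,j} ⊆ {2,3,4,5}. -/
def w : Fin 6 → (Pair 5 → ℝ) :=
  ![v 5 {1, 2}, v 5 {1, 3}, v 5 {1, 4}, v 5 {2, 3}, v 5 {2, 4}, v 5 {3, 4}]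

/-!
Every `f = ∑ l a • d a` satisfies the four-point relation `f {a, b} + f {c, e} = f {a, c} + f {b, e}`,
both sides being `l a + l b + l c + l e`. For `f = ∑ cᵢ • wᵢ` and `a = 0` it equates the
coefficients of two rays sharing an end, so a combination of the rays lies in `L` only if all its
coefficients agree; conversely the sum of the six rays is `d 0 + 2 (d 1 + d 2 + d 3 + d 4)`.
-/

open Finset Submodule

def Pair.of {n : ℕ} {a b : Fin n} (h : a ≠ b) : Pair n := ⟨{a, b}, card_pair h⟩

section

variable {n : ℕ}

theorem Pair.of_val {a b : Fin n} (h : a ≠ b) : (Pair.of h).val = {a, b} := rfl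

theorem v_apply (I : Finset (Fin n)) (p : Pair n) :
    v n I p = if (I ∩ p.val).card = 1 then 1 else 0 := rfl

theorem d_apply (a : Fin n) (p : Pair n) : d n a p = if a ∈ p.val then 1 else 0 := by
  by_cases ha : a ∈ p.val
  · simp [d, v, singleton_inter_of_mem ha, ha]
  · simp [d, v, singleton_inter_of_notMem ha, ha]

theorem sum_smul_d_apply (l : Fin n → ℝ) (p : Pair n) :
    (∑ a, l a • d n a) p = ∑ a ∈ p.val, l a := by
  simp [Finset.sum_apply, d_apply, Finset.sum_ite_mem]

theorem sum_smul_d_apply_of (l : Fin n → ℝ) {a b : Fin n} (h : a ≠ b) :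
    (∑ x, l x • d n x) (Pair.of h) = l a + l b := by
  rw [sum_smul_d_apply, Pair.of_val, sum_pair h]

theorem apply_add_apply_eq_of_mem_span_d {f : Pair n → ℝ}
    (hf : f ∈ span ℝ (Set.range (d n))) {a b c e : Fin n}
    (hab : a ≠ b) (hce : c ≠ e) (hac : a ≠ c) (hbe : b ≠ e) :
    f (Pair.of hab) + f (Pair.of hce) = f (Pair.of hac) + f (Pair.of hbe) := by
  obtain ⟨l, rfl⟩ := (mem_span_range_iff_exists_fun ℝ).mp hf
  simp only [sum_smul_d_apply_of]
  ring

end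

-- `v {a, b} = d a + d b - 2 e_{ab}` for the coordinate vector `e_{ab}`, and the `e_{ab}` with
-- `0 ∉ {a, b}` sum to `(∑ d) / 2 - d 0`.
theorem sum_w : ∑ i, w i = d 5 0 + (2 : ℝ) • (d 5 1 + d 5 2 + d 5 3 + d 5 4) := by
  funext p
  simp only [Finset.sum_apply, Pi.add_apply, Pi.smul_apply, Fin.sum_univ_six, w, Matrix.cons_val]
  obtain ⟨p, hp⟩ := p
  obtain ⟨a, b, hab, rfl⟩ := card_eq_two.mp hp
  fin_cases a <;> fin_cases b
  all_goals simp_all +decide [v, d]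
  all_goals norm_num

theorem sum_smul_w_mem_span_iff (c : Fin 6 → ℝ) :
    ∑ i, c i • w i ∈ span ℝ (Set.range (d 5)) ↔ ∀ i j, c i = c j := by
  constructor
  · intro hf
    -- Each instance equates the coefficients of two rays sharing an end; together they connect
    -- all six rays.
    have h₁ := apply_add_apply_eq_of_mem_span_d hf (a := 0) (b := 3) (c := 2) (e := 1)
      (by decide) (by decide) (by decide) (by decide)
    have h₂ := apply_add_apply_eq_of_mem_span_d hf (a := 0) (b := 4) (c := 2) (e := 1)
      (by decide) (by decide) (by decide) (by decide)
    have h₃ := apply_add_apply_eq_of_mem_span_d hf (a := 0) (b := 3) (c := 1) (e := 2)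
      (by decide) (by decide) (by decide) (by decide)
    have h₄ := apply_add_apply_eq_of_mem_span_d hf (a := 0) (b := 4) (c := 1) (e := 2)
      (by decide) (by decide) (by decide) (by decide)
    have h₅ := apply_add_apply_eq_of_mem_span_d hf (a := 0) (b := 4) (c := 1) (e := 3)
      (by decide) (by decide) (by decide) (by decide)
    simp only [Finset.sum_apply, Pi.smul_apply, smul_eq_mul, Fin.sum_univ_six, w,
      Matrix.cons_val, v_apply, Pair.of_val] at h₁ h₂ h₃ h₄ h₅
    simp +decide at h₁ h₂ h₃ h₄ h₅
    have hc0 (i : Fin 6) : c i = c 0 := by fin_cases i <;> dsimp <;> linarith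
    exact fun i j => (hc0 i).trans (hc0 j).symm
  · intro hc
    have hconst : c = fun _ => c 0 := funext fun i => hc i 0
    rw [hconst, ← Finset.smul_sum, sum_w]
    have hd (a : Fin 5) : d 5 a ∈ span ℝ (Set.range (d 5)) := subset_span ⟨a, rfl⟩
    exact smul_mem _ _ (add_mem (hd 0) (smul_mem _ _
      (add_mem (add_mem (add_mem (hd 1) (hd 2)) (hd 3)) (hd 4))))

/-- The six vectors form a minimally dependent set modulo L = span(d₁,…,d₅). -/
theorem psi_class_minimally_dependent :
    (∃ c : Fin 6 → ℝ, c ≠ 0 ∧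
        ∑ i, c i • w i ∈ Submodule.span ℝ (Set.range (d 5))) ∧
    ∀ S : Finset (Fin 6), S ≠ Finset.univ →
      ∀ c : Fin 6 → ℝ, (∀ i ∉ S, c i = 0) →
        ∑ i, c i • w i ∈ Submodule.span ℝ (Set.range (d 5)) → c = 0 := by
  refine ⟨⟨1, one_ne_zero, (sum_smul_w_mem_span_iff 1).2 fun _ _ => rfl⟩, ?_⟩
  intro S hS c hc hmem
  obtain ⟨j, hj⟩ : ∃ j, j ∉ S := by simpa [eq_univ_iff_forall] using hS
  funext i
  rw [(sum_smul_w_mem_span_iff c).1 hmem i j, hc j hj, Pi.zero_apply]
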